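/- (Tilted measure bounds for ball and backtracking region.) Let d ≥ 1, δ ∈ (0,1), b, λ, L > 0, and let ℓ, ℓ' be unit vectors with ℓ·ℓ' > √(1−δ²). Let m(dx) = e^{2λℓ·x} dx, B = the open Euclidean ball of radius (1∧b)L/4 centered at 0, V_{ℓ',δ} = {x : −bL < x·ℓ' < L, |Π_{ℓ'}(x)| < L/√δ}, and V⁻ = {x ∈ V_{ℓ',δ} : x·ℓ' < −(3/4)(1∧b)L}. Then for all L ≥ 1: (i) m(B) ≤ c L^d exp(λ(1∧b)L/2) with c depending only on b, d, λ; (ii) m(V⁻) ≤ c L^d exp(−(3/2)λ(1∧b)√(1−δ²) L + 2λ√δ L) with c depending only on δ, b, d, λ; and (iii) the Euclidean distance between B and V⁻ is at least (1/2)(1∧b)L. -/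

import Mathlib

/-!
On the ball of radius `r = (1 ∧ b)L/4` the tilt `e^{2λℓ·x}` is at most `e^{2λr}`, and `V⁻` lies
in a ball of radius `O(L)`, so both integrals are at most the volume `O(L^d)` times the supremum of
the tilt.
On `V⁻`, write `x = tℓ' + y` with `y ⊥ ℓ'`: then `ℓ·x = t (ℓ·ℓ') + (ℓ - (ℓ·ℓ')ℓ')·y`, where
`t < -(3/4)(1∧b)L` and `ℓ·ℓ' > √(1-δ²)` make the first term at most `-(3/4)(1∧b)√(1-δ²)L`, and
`|ℓ - (ℓ·ℓ')ℓ'| = √(1-(ℓ·ℓ')²) < δ` together with `|y| < L/√δ` bounds the second by `√δ L`.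
Points of `B` and of `V⁻` are separated by their `ℓ'`-coordinates, which gives (iii).
-/

open MeasureTheory Set
open scoped RealInnerProductSpace

noncomputable section

abbrev EucSp (d : ℕ) : Type := EuclideanSpace ℝ (Fin d)

/-- the cylinder `V_{ℓ',δ}` (with parameters `b`, `L`), radius `ρ`. -/
def cyl {d : ℕ} (ℓ' : EucSp d) (b L ρ : ℝ) : Set (EucSp d) :=
  {x | -(b * L) < ⟪x, ℓ'⟫ ∧ ⟪x, ℓ'⟫ < L ∧ ‖x - ⟪x, ℓ'⟫ • ℓ'‖ < ρ}

/-- the backtracked part `V⁻` of `V_{ℓ',δ}`. -/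
def VminusG {d : ℕ} (ℓ' : EucSp d) (δ b L : ℝ) : Set (EucSp d) :=
  {x ∈ cyl ℓ' b L (L / Real.sqrt δ) | ⟪x, ℓ'⟫ < -(3 / 4 * (min 1 b) * L)}

open Metric Module

section HaarBound

variable {E : Type*} [NormedAddCommGroup E] [NormedSpace ℝ E] [FiniteDimensional ℝ E]
  [MeasurableSpace E] [BorelSpace E]

theorem setIntegral_le_of_subset_closedBall (μ : Measure E) [μ.IsAddHaarMeasure] {f : E → ℝ}
    {S : Set E} {ρ C : ℝ} (hρ : 0 ≤ ρ) (hC : 0 ≤ C) (hS : S ⊆ closedBall 0 ρ)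
    (hf : ∀ x ∈ S, ‖f x‖ ≤ C) :
    ∫ x in S, f x ∂μ ≤ C * (ρ ^ finrank ℝ E * μ.real (ball 0 1)) := by
  have hvol : μ.real S ≤ ρ ^ finrank ℝ E * μ.real (ball 0 1) := by
    calc μ.real S ≤ μ.real (closedBall 0 ρ) := measureReal_mono hS measure_closedBall_lt_top.ne
      _ = ρ ^ finrank ℝ E * μ.real (ball 0 1) := by
        rw [measureReal_def, Measure.addHaar_closedBall _ _ hρ, ENNReal.toReal_mul,
          ENNReal.toReal_ofReal (by positivity), measureReal_def]
  calc ∫ x in S, f x ∂μ ≤ ‖∫ x in S, f x ∂μ‖ := le_abs_self _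
    _ ≤ C * μ.real S :=
      norm_setIntegral_le_of_norm_le_const ((measure_mono hS).trans_lt measure_closedBall_lt_top) hf
    _ ≤ C * (ρ ^ finrank ℝ E * μ.real (ball 0 1)) := by gcongr

end HaarBound

section InnerProduct

variable {E : Type*} [NormedAddCommGroup E] [InnerProductSpace ℝ E]

theorem neg_norm_le_inner_of_norm_eq_one {ℓ : E} (hℓ : ‖ℓ‖ = 1) (x : E) : -‖x‖ ≤ ⟪x, ℓ⟫ := by
  simpa [hℓ] using neg_le_of_abs_le (abs_real_inner_le_norm x ℓ)

theorem inner_le_norm_of_norm_eq_one {ℓ : E} (hℓ : ‖ℓ‖ = 1) (x : E) : ⟪ℓ, x⟫ ≤ ‖x‖ := by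
  simpa [hℓ] using real_inner_le_norm ℓ x

theorem norm_le_of_inner_mem_Ioo {ℓ' x : E} (hℓ' : ‖ℓ'‖ = 1) {a c : ℝ} (ha : 0 ≤ a) (hc : 0 ≤ c)
    (hx : ⟪x, ℓ'⟫ ∈ Ioo (-a) c) : ‖x‖ ≤ a + c + ‖x - ⟪x, ℓ'⟫ • ℓ'‖ := by
  have habs : |⟪x, ℓ'⟫| ≤ a + c := abs_le.mpr ⟨by linarith [hx.1], by linarith [hx.2]⟩
  calc ‖x‖ = ‖⟪x, ℓ'⟫ • ℓ' + (x - ⟪x, ℓ'⟫ • ℓ')‖ := by rw [add_sub_cancel]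
    _ ≤ |⟪x, ℓ'⟫| + ‖x - ⟪x, ℓ'⟫ • ℓ'‖ := by
      simpa [norm_smul, hℓ'] using norm_add_le (⟪x, ℓ'⟫ • ℓ') (x - ⟪x, ℓ'⟫ • ℓ')
    _ ≤ a + c + ‖x - ⟪x, ℓ'⟫ • ℓ'‖ := by gcongr

theorem inner_le_inner_mul_add_sqrt_mul_norm {ℓ ℓ' : E} (hℓ : ‖ℓ‖ = 1) (hℓ' : ‖ℓ'‖ = 1) (x : E) :
    ⟪ℓ, x⟫ ≤ ⟪x, ℓ'⟫ * ⟪ℓ, ℓ'⟫ + √(1 - ⟪ℓ, ℓ'⟫ ^ 2) * ‖x - ⟪x, ℓ'⟫ • ℓ'‖ := by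
  set s := ⟪ℓ, ℓ'⟫
  set t := ⟪x, ℓ'⟫
  have hℓ'ℓ' : ⟪ℓ', ℓ'⟫ = 1 := by rw [real_inner_self_eq_norm_sq, hℓ', one_pow]
  have hsplit : ⟪ℓ, x⟫ = t * s + ⟪ℓ - s • ℓ', x - t • ℓ'⟫ := by
    simp only [inner_sub_left, inner_sub_right, real_inner_smul_left, real_inner_smul_right,
      hℓ'ℓ', real_inner_comm ℓ' x, s, t]
    ring
  have hnorm : ‖ℓ - s • ℓ'‖ = √(1 - s ^ 2) := by
    rw [← Real.sqrt_sq (norm_nonneg _), norm_sub_sq_real, norm_smul, hℓ, hℓ',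
      real_inner_smul_right, Real.norm_eq_abs, mul_one, sq_abs]
    congr 1
    simp only [s]
    ring
  rw [hsplit, ← hnorm]
  gcongr
  exact real_inner_le_norm _ _

end InnerProduct

theorem inner_le_of_mem_VminusG {d : ℕ} {δ b L : ℝ} (hδ : 0 < δ) (hb : 0 ≤ b) (hL : 0 ≤ L)
    {ℓ ℓ' x : EucSp d} (hℓ : ‖ℓ‖ = 1) (hℓ' : ‖ℓ'‖ = 1) (hang : √(1 - δ ^ 2) < ⟪ℓ, ℓ'⟫)
    (hx : x ∈ VminusG ℓ' δ b L) :
    ⟪ℓ, x⟫ ≤ -(3 / 4 * min 1 b * L) * √(1 - δ ^ 2) + √δ * L := by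
  obtain ⟨⟨-, -, hperp⟩, hback⟩ := hx
  have hsqrt : √(1 - ⟪ℓ, ℓ'⟫ ^ 2) ≤ δ :=
    (Real.sqrt_le_left hδ.le).mpr (by linarith [Real.lt_sq_of_sqrt_lt hang])
  have hlong : ⟪x, ℓ'⟫ * ⟪ℓ, ℓ'⟫ ≤ -(3 / 4 * min 1 b * L) * √(1 - δ ^ 2) := by
    have : 0 ≤ 3 / 4 * min 1 b * L := by positivity
    calc ⟪x, ℓ'⟫ * ⟪ℓ, ℓ'⟫ ≤ ⟪x, ℓ'⟫ * √(1 - δ ^ 2) :=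
          mul_le_mul_of_nonpos_left hang.le (by linarith)
      _ ≤ -(3 / 4 * min 1 b * L) * √(1 - δ ^ 2) := by gcongr
  have htrans : √(1 - ⟪ℓ, ℓ'⟫ ^ 2) * ‖x - ⟪x, ℓ'⟫ • ℓ'‖ ≤ √δ * L :=
    calc √(1 - ⟪ℓ, ℓ'⟫ ^ 2) * ‖x - ⟪x, ℓ'⟫ • ℓ'‖ ≤ δ * (L / √δ) := by gcongr
      _ = √δ * L := by
        field_simp
        rw [Real.sq_sqrt hδ.le, mul_comm]
  linarith [inner_le_inner_mul_add_sqrt_mul_norm hℓ hℓ' x]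

theorem VminusG_subset_closedBall {d : ℕ} {δ b L : ℝ} (hb : 0 ≤ b) (hL : 0 ≤ L)
    {ℓ' : EucSp d} (hℓ' : ‖ℓ'‖ = 1) :
    VminusG ℓ' δ b L ⊆ closedBall 0 ((b + 1 + 1 / √δ) * L) := by
  rintro x ⟨⟨hlow, hup, hperp⟩, -⟩
  rw [mem_closedBall_zero_iff]
  have := norm_le_of_inner_mem_Ioo hℓ' (by positivity) hL ⟨hlow, hup⟩
  have hrad : (b + 1 + 1 / √δ) * L = b * L + L + L / √δ := by ring
  linarith

theorem setIntegral_exp_inner_le {d : ℕ} {lam : ℝ} (hlam : 0 ≤ lam) (ℓ : EucSp d)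
    {S : Set (EucSp d)} {ρ M : ℝ} (hρ : 0 ≤ ρ) (hS : S ⊆ closedBall 0 ρ)
    (hM : ∀ x ∈ S, ⟪ℓ, x⟫ ≤ M) :
    ∫ x in S, Real.exp (2 * lam * ⟪ℓ, x⟫) ≤
      volume.real (ball (0 : EucSp d) 1) * ρ ^ d * Real.exp (2 * lam * M) := by
  have h := setIntegral_le_of_subset_closedBall volume hρ (Real.exp_pos _).le hS
    (f := fun x => Real.exp (2 * lam * ⟪ℓ, x⟫)) (C := Real.exp (2 * lam * M)) fun x hx => by
      rw [Real.norm_of_nonneg (Real.exp_pos _).le]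
      gcongr
      exact hM x hx
  rw [finrank_euclideanSpace_fin] at h
  linarith

theorem sub_lt_dist_of_mem_ball_of_inner_lt {d : ℕ} {ℓ' x y : EucSp d} (hℓ' : ‖ℓ'‖ = 1)
    {r a : ℝ} (hx : x ∈ ball 0 r) (hy : ⟪y, ℓ'⟫ < -a) : a - r < dist x y := by
  rw [mem_ball_zero_iff] at hx
  have h := inner_le_norm_of_norm_eq_one hℓ' (x - y)
  rw [real_inner_comm, inner_sub_left] at h
  linarith [neg_norm_le_inner_of_norm_eq_one hℓ' x, dist_eq_norm x y]

theorem tilted_measure_bounds_general (d : ℕ) (δ b lam : ℝ)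
    (hδ0 : 0 < δ) (hb : 0 < b) (hlam : 0 < lam) :
    -- (i) bound on `m(B)`
    (∃ c > (0:ℝ), ∀ ℓ ℓ' : EucSp d, ‖ℓ‖ = 1 → ‖ℓ'‖ = 1 →
      Real.sqrt (1 - δ ^ 2) < ⟪ℓ, ℓ'⟫ → ∀ L ≥ (1:ℝ),
        ∫ x in Metric.ball (0 : EucSp d) (min 1 b * L / 4),
            Real.exp (2 * lam * ⟪ℓ, x⟫) ≤
          c * L ^ (d : ℝ) * Real.exp (lam * min 1 b * L / 2)) ∧
    -- (ii) bound on `m(V⁻)`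
    (∃ c > (0:ℝ), ∀ ℓ ℓ' : EucSp d, ‖ℓ‖ = 1 → ‖ℓ'‖ = 1 →
      Real.sqrt (1 - δ ^ 2) < ⟪ℓ, ℓ'⟫ → ∀ L ≥ (1:ℝ),
        ∫ x in VminusG ℓ' δ b L, Real.exp (2 * lam * ⟪ℓ, x⟫) ≤
          c * L ^ (d : ℝ) *
            Real.exp (-(3 / 2) * lam * min 1 b * Real.sqrt (1 - δ ^ 2) * L +
              2 * lam * Real.sqrt δ * L)) ∧
    -- (iii) distance bound
    (∀ ℓ ℓ' : EucSp d, ‖ℓ‖ = 1 → ‖ℓ'‖ = 1 →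
      Real.sqrt (1 - δ ^ 2) < ⟪ℓ, ℓ'⟫ → ∀ L ≥ (1:ℝ),
      ∀ x ∈ Metric.ball (0 : EucSp d) (min 1 b * L / 4), ∀ y ∈ VminusG ℓ' δ b L,
        1 / 2 * min 1 b * L ≤ dist x y) := by
  have hm : 0 < min 1 b := lt_min one_pos hb
  have hK : 0 < volume.real (ball (0 : EucSp d) 1) :=
    ENNReal.toReal_pos (measure_ball_pos volume 0 one_pos).ne' measure_ball_lt_top.ne
  refine ⟨⟨_, hK, fun ℓ ℓ' hℓ _ _ L hL => ?_⟩,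
    ⟨(b + 1 + 1 / √δ) ^ d * volume.real (ball (0 : EucSp d) 1), by positivity,
      fun ℓ ℓ' hℓ hℓ' hang L hL => ?_⟩,
    fun ℓ ℓ' _ hℓ' _ L hL x hx y hy => ?_⟩
  · have hr : min 1 b * L / 4 ≤ L := by nlinarith [min_le_left 1 b]
    refine (setIntegral_exp_inner_le hlam.le ℓ (by positivity) ball_subset_closedBall
      fun x hx => (inner_le_norm_of_norm_eq_one hℓ x).trans (mem_ball_zero_iff.mp hx).le).trans ?_
    rw [Real.rpow_natCast]
    gcongr
    exact (by ring : _ = _).le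
  · refine (setIntegral_exp_inner_le hlam.le ℓ (by positivity)
      (VminusG_subset_closedBall hb.le (by linarith) hℓ')
      fun x hx => inner_le_of_mem_VminusG hδ0 hb.le (by linarith) hℓ hℓ' hang hx).trans
      (le_of_eq ?_)
    rw [Real.rpow_natCast, mul_pow]
    ring_nf
  · have := sub_lt_dist_of_mem_ball_of_inner_lt hℓ' hx hy.2
    linarith

theorem tilted_measure_bounds (d : ℕ) (hd : 1 ≤ d) (δ b lam : ℝ)
    (hδ0 : 0 < δ) (hδ1 : δ < 1) (hb : 0 < b) (hlam : 0 < lam) :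
    -- (i) bound on `m(B)`
    (∃ c > (0:ℝ), ∀ ℓ ℓ' : EucSp d, ‖ℓ‖ = 1 → ‖ℓ'‖ = 1 →
      Real.sqrt (1 - δ ^ 2) < ⟪ℓ, ℓ'⟫ → ∀ L ≥ (1:ℝ),
        ∫ x in Metric.ball (0 : EucSp d) (min 1 b * L / 4),
            Real.exp (2 * lam * ⟪ℓ, x⟫) ≤
          c * L ^ (d : ℝ) * Real.exp (lam * min 1 b * L / 2)) ∧
    -- (ii) bound on `m(V⁻)`
    (∃ c > (0:ℝ), ∀ ℓ ℓ' : EucSp d, ‖ℓ‖ = 1 → ‖ℓ'‖ = 1 →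
      Real.sqrt (1 - δ ^ 2) < ⟪ℓ, ℓ'⟫ → ∀ L ≥ (1:ℝ),
        ∫ x in VminusG ℓ' δ b L, Real.exp (2 * lam * ⟪ℓ, x⟫) ≤
          c * L ^ (d : ℝ) *
            Real.exp (-(3 / 2) * lam * min 1 b * Real.sqrt (1 - δ ^ 2) * L +
              2 * lam * Real.sqrt δ * L)) ∧
    -- (iii) distance bound
    (∀ ℓ ℓ' : EucSp d, ‖ℓ‖ = 1 → ‖ℓ'‖ = 1 →
      Real.sqrt (1 - δ ^ 2) < ⟪ℓ, ℓ'⟫ → ∀ L ≥ (1:ℝ),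
      ∀ x ∈ Metric.ball (0 : EucSp d) (min 1 b * L / 4), ∀ y ∈ VminusG ℓ' δ b L,
        1 / 2 * min 1 b * L ≤ dist x y) :=
  tilted_measure_bounds_general d δ b lam hδ0 hb hlam

end
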